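/- arXiv:0707.4385 — 2 statements merged into one kernel-verified Lean document; each statement's English description precedes it below -/
import Mathlib

section
/- For any octonions a, b, c, the real part of (ab)c equals the real part of a(bc). -/
noncomputable section

def Oct : Type := Quaternion ℝ × Quaternion ℝ

namespace Oct

def fst (p : Oct) : Quaternion ℝ := Prod.fst p
def snd (p : Oct) : Quaternion ℝ := Prod.snd p

instance : NormedAddCommGroup Oct :=
  inferInstanceAs (NormedAddCommGroup (Quaternion ℝ × Quaternion ℝ))
instance : NormedSpace ℝ Oct :=
  inferInstanceAs (NormedSpace ℝ (Quaternion ℝ × Quaternion ℝ))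
instance : MeasurableSpace Oct := borel Oct

instance : One Oct := ⟨((1 : Quaternion ℝ), (0 : Quaternion ℝ))⟩

/-- Cayley–Dickson multiplication on 𝕆 = ℍ × ℍ. -/
instance : Mul Oct := ⟨fun p q =>
  (fst p * fst q - star (snd q) * snd p, snd q * fst p + snd p * star (fst q))⟩

/-- Octonionic conjugation. -/
def conj (p : Oct) : Oct := (star (fst p), -(snd p))

/-- Real part of an octonion. -/
def re (p : Oct) : ℝ := (fst p).re

/-- |p|² = Re(p p̄). -/
def normSq (p : Oct) : ℝ := re (p * conj p)

/-- Embedding of the reals into the octonions. -/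
def ofReal (r : ℝ) : Oct := ((r : Quaternion ℝ), (0 : Quaternion ℝ))

end Oct

/-! By the Cayley–Dickson formula, `Re (p * q) = Re (p₁ q₁) - Re (q₂* p₂)`. Expanding both
`Re ((a b) c)` and `Re (a (b c))` this way leaves four real parts of triple products of quaternions
on each side; they agree pairwise because ℍ is associative and `Re (x y) = Re (y x)`. -/

theorem Quaternion.re_mul_comm {R : Type*} [CommRing R] (a b : Quaternion R) :
    (a * b).re = (b * a).re := by
  simp only [Quaternion.re_mul]
  ring

namespace Oct

theorem fst_mul (p q : Oct) : fst (p * q) = fst p * fst q - star (snd q) * snd p := rfl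

theorem snd_mul (p q : Oct) : snd (p * q) = snd q * fst p + snd p * star (fst q) := rfl

theorem re_mul (p q : Oct) : re (p * q) = (fst p * fst q).re - (star (snd q) * snd p).re := by
  rw [re, fst_mul, Quaternion.re_sub]

end Oct

/-- Re((ab)c) = Re(a(bc)) for all octonions. -/
theorem re_mul_assoc (a b c : Oct) :
    Oct.re ((a * b) * c) = Oct.re (a * (b * c)) := by
  calc Oct.re ((a * b) * c)
      = (a.fst * b.fst * c.fst).re - (star b.snd * a.snd * c.fst).re
          - (star c.snd * b.snd * a.fst).re - (star c.snd * a.snd * star b.fst).re := by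
        simp only [Oct.re_mul, Oct.fst_mul, Oct.snd_mul, sub_mul, mul_add, Quaternion.re_sub,
          Quaternion.re_add, mul_assoc]
        ring
    _ = (a.fst * b.fst * c.fst).re - (c.fst * star b.snd * a.snd).re
          - (a.fst * star c.snd * b.snd).re - (star b.fst * star c.snd * a.snd).re := by
        rw [Quaternion.re_mul_comm (star b.snd * a.snd), Quaternion.re_mul_comm (star c.snd * b.snd),
          Quaternion.re_mul_comm (star c.snd * a.snd)]
        simp only [mul_assoc]
    _ = Oct.re (a * (b * c)) := by
        simp only [Oct.re_mul, Oct.fst_mul, Oct.snd_mul, star_add, star_mul, star_star, mul_sub,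
          add_mul, Quaternion.re_sub, Quaternion.re_add, mul_assoc]
        ring
end
end

section
/- The octonionic projective line equivalence: for unit vectors ξ = (x,y) ∈ 𝕆² with y ≠ 0, one has ξξ* = ηη* where η is the normalization of (x y⁻¹, 1); in particular ξξ* determines and is determined by the element x y⁻¹ ∈ 𝕆 (together with the norm condition). -/
noncomputable section

/-- The inverse of an octonion: q⁻¹ = q̄ / |q|². -/
def Oct.inv (p : Oct) : Oct := (Oct.normSq p)⁻¹ • Oct.conj p

/-!
Since `x y⁻¹ = |y|⁻² x ȳ` and the norm is multiplicative, on the unit sphere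
`|x y⁻¹|² + 1 = |y|⁻²`, so `η = |y| (x y⁻¹, 1) = (|y|⁻¹ x ȳ, |y|)`. Each entry of `ηη*` then
reduces to the corresponding entry of `ξξ*` using only real scalars, `conj (p q) = q̄ p̄` and
`p p̄ = |p|²`; no associativity of `𝕆` is needed.
-/

namespace Oct

theorem mul_def (p q : Oct) :
    p * q = (p.1 * q.1 - star q.2 * p.2, q.2 * p.1 + p.2 * star q.1) := rfl

theorem conj_def (p : Oct) : conj p = (star p.1, -p.2) := rfl

theorem normSq_eq (p : Oct) : normSq p = Quaternion.normSq p.1 + Quaternion.normSq p.2 := by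
  show (p.1 * star p.1 - star (-p.2) * p.2).re = _
  simp [Quaternion.self_mul_star, Quaternion.star_mul_self]

theorem normSq_pos {p : Oct} (hp : p ≠ 0) : 0 < normSq p := by
  rw [normSq_eq]
  refine lt_of_le_of_ne (add_nonneg Quaternion.normSq_nonneg Quaternion.normSq_nonneg) fun h => hp ?_
  rw [eq_comm, add_eq_zero_iff_of_nonneg Quaternion.normSq_nonneg Quaternion.normSq_nonneg] at h
  exact Prod.ext (Quaternion.normSq_eq_zero.mp h.1) (Quaternion.normSq_eq_zero.mp h.2)

theorem normSq_conj (p : Oct) : normSq (conj p) = normSq p := by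
  rw [normSq_eq, normSq_eq]
  show Quaternion.normSq (star p.1) + Quaternion.normSq (-p.2) = _
  simp

theorem normSq_smul (r : ℝ) (p : Oct) : normSq (r • p) = r ^ 2 * normSq p := by
  rw [normSq_eq, normSq_eq]
  show Quaternion.normSq (r • p.1) + Quaternion.normSq (r • p.2) = _
  rw [Quaternion.normSq_smul, Quaternion.normSq_smul, mul_add]

-- A polynomial identity in the sixteen real coordinates.
theorem normSq_mul (p q : Oct) : normSq (p * q) = normSq p * normSq q := by
  rw [normSq_eq, normSq_eq, normSq_eq, mul_def]
  show Quaternion.normSq (p.1 * q.1 - star q.2 * p.2) +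
    Quaternion.normSq (q.2 * p.1 + p.2 * star q.1) = _
  simp only [Quaternion.normSq_def', Quaternion.re_mul, Quaternion.imI_mul, Quaternion.imJ_mul,
    Quaternion.imK_mul, Quaternion.re_sub, Quaternion.imI_sub, Quaternion.imJ_sub,
    Quaternion.imK_sub, Quaternion.re_add, Quaternion.imI_add, Quaternion.imJ_add,
    Quaternion.imK_add, Quaternion.re_star, Quaternion.imI_star, Quaternion.imJ_star,
    Quaternion.imK_star]
  ring

theorem mul_conj_self (p : Oct) : p * conj p = normSq p • (1 : Oct) := by
  rw [mul_def, conj_def, normSq_eq]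
  refine Prod.ext ?_ ?_
  · show p.1 * star p.1 - star (-p.2) * p.2 = (Quaternion.normSq p.1 + Quaternion.normSq p.2) • 1
    rw [← Quaternion.coe_one, Quaternion.smul_coe, mul_one]
    simp [Quaternion.self_mul_star, Quaternion.star_mul_self]
  · show -p.2 * p.1 + p.2 * star (star p.1) = (Quaternion.normSq p.1 + Quaternion.normSq p.2) • 0
    simp

theorem conj_conj (p : Oct) : conj (conj p) = p :=
  Prod.ext (star_star _) (neg_neg _)

theorem conj_one : conj (1 : Oct) = 1 :=
  Prod.ext (star_one _) neg_zero

theorem conj_smul (r : ℝ) (p : Oct) : conj (r • p) = r • conj p :=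
  Prod.ext (Quaternion.star_smul r p.1) (smul_neg r p.2).symm

theorem conj_mul (p q : Oct) : conj (p * q) = conj q * conj p := by
  refine Prod.ext ?_ ?_
  · show star (p.1 * q.1 - star q.2 * p.2) = star q.1 * star p.1 - star (-p.2) * -q.2
    simp
  · show -(q.2 * p.1 + p.2 * star q.1) = -p.2 * star q.1 + -q.2 * star (star p.1)
    rw [star_star, neg_add, neg_mul, neg_mul, add_comm]

protected theorem mul_one (p : Oct) : p * 1 = p := by
  refine Prod.ext ?_ ?_
  · show p.1 * 1 - star (0 : Quaternion ℝ) * p.2 = p.1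
    simp
  · show (0 : Quaternion ℝ) * p.1 + p.2 * star 1 = p.2
    simp

protected theorem one_mul (p : Oct) : 1 * p = p := by
  refine Prod.ext ?_ ?_
  · show 1 * p.1 - star p.2 * (0 : Quaternion ℝ) = p.1
    simp
  · show p.2 * 1 + (0 : Quaternion ℝ) * star p.1 = p.2
    simp

protected theorem smul_mul (r : ℝ) (p q : Oct) : (r • p) * q = r • (p * q) := by
  refine Prod.ext ?_ ?_
  · show (r • p.1) * q.1 - star q.2 * (r • p.2) = r • (p.1 * q.1 - star q.2 * p.2)
    simp [smul_sub]
  · show q.2 * (r • p.1) + (r • p.2) * star q.1 = r • (q.2 * p.1 + p.2 * star q.1)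
    simp [smul_add]

protected theorem mul_smul (r : ℝ) (p q : Oct) : p * (r • q) = r • (p * q) := by
  refine Prod.ext ?_ ?_
  · show p.1 * (r • q.1) - star (r • q.2) * p.2 = r • (p.1 * q.1 - star q.2 * p.2)
    simp [smul_sub]
  · show (r • q.2) * p.1 + p.2 * star (r • q.1) = r • (q.2 * p.1 + p.2 * star q.1)
    simp [smul_add]

theorem smul_mul_conj_smul (r : ℝ) (p q : Oct) :
    (r • p) * conj (r • q) = (r * r) • (p * conj q) := by
  rw [conj_smul, Oct.smul_mul, Oct.mul_smul, smul_smul]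

theorem mul_inv (p q : Oct) : p * inv q = (normSq q)⁻¹ • (p * conj q) :=
  Oct.mul_smul _ _ _

theorem normSq_mul_inv (p q : Oct) : normSq (p * inv q) = normSq p / normSq q := by
  rw [mul_inv, normSq_smul, normSq_mul, normSq_conj]
  field_simp

theorem inv_sqrt_normSq_mul_inv_add_one {x y : Oct} (hunit : normSq x + normSq y = 1)
    (hy : y ≠ 0) : (Real.sqrt (normSq (x * inv y) + 1))⁻¹ = Real.sqrt (normSq y) := by
  have hn := normSq_pos hy
  have : normSq (x * inv y) + 1 = (normSq y)⁻¹ := by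
    rw [normSq_mul_inv]
    field_simp
    linarith
  rw [this, Real.sqrt_inv, inv_inv]

end Oct

/-- For a unit vector ξ = (x,y) ∈ 𝕆² with y ≠ 0, one has ξξ* = ηη* where η is the
normalization of (x y⁻¹, 1); the four entries of the 2×2 matrices agree. -/
theorem proj_line_equivalence (x y : Oct)
    (hunit : Oct.normSq x + Oct.normSq y = 1) (hy : y ≠ 0) :
    x * Oct.conj x =
        ((Real.sqrt (Oct.normSq (x * Oct.inv y) + 1))⁻¹ • (x * Oct.inv y)) *
          Oct.conj ((Real.sqrt (Oct.normSq (x * Oct.inv y) + 1))⁻¹ • (x * Oct.inv y)) ∧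
    x * Oct.conj y =
        ((Real.sqrt (Oct.normSq (x * Oct.inv y) + 1))⁻¹ • (x * Oct.inv y)) *
          Oct.conj ((Real.sqrt (Oct.normSq (x * Oct.inv y) + 1))⁻¹ • (1 : Oct)) ∧
    y * Oct.conj x =
        ((Real.sqrt (Oct.normSq (x * Oct.inv y) + 1))⁻¹ • (1 : Oct)) *
          Oct.conj ((Real.sqrt (Oct.normSq (x * Oct.inv y) + 1))⁻¹ • (x * Oct.inv y)) ∧
    y * Oct.conj y =
        ((Real.sqrt (Oct.normSq (x * Oct.inv y) + 1))⁻¹ • (1 : Oct)) *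
          Oct.conj ((Real.sqrt (Oct.normSq (x * Oct.inv y) + 1))⁻¹ • (1 : Oct)) := by
  have hn : 0 < Oct.normSq y := Oct.normSq_pos hy
  have hs : Real.sqrt (Oct.normSq y) * Real.sqrt (Oct.normSq y) = Oct.normSq y :=
    Real.mul_self_sqrt hn.le
  have hxy : Oct.normSq y • (x * Oct.inv y) = x * Oct.conj y := by
    rw [Oct.mul_inv, smul_smul, mul_inv_cancel₀ hn.ne', one_smul]
  rw [Oct.inv_sqrt_normSq_mul_inv_add_one hunit hy]
  simp only [Oct.smul_mul_conj_smul, hs, Oct.conj_one, Oct.mul_one, Oct.one_mul]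
  refine ⟨?_, hxy.symm, ?_, ?_⟩
  · rw [Oct.mul_conj_self, Oct.mul_conj_self, Oct.normSq_mul_inv, smul_smul,
      mul_div_cancel₀ _ hn.ne']
  · rw [← Oct.conj_smul, hxy, Oct.conj_mul, Oct.conj_conj]
  · rw [Oct.mul_conj_self]
end
end
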